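/- arXiv:2503.14215 — 4 statements merged into one kernel-verified Lean document; each statement's English description precedes it below -/
import Mathlib

section
/- Let u be a C³ solution of div(∇u/√(1+|∇u|²)) + f(u) = 0 in Ω and P = F(u) - (1+|∇u|²)^{-1/2} where F' = f. Then at any point where ∇u ≠ 0, |∇P|² = f(u) ∇P·∇u + (1+|∇u|²)^{-3/2} P_i u_j u_{ij}. -/
noncomputable section

/-- Partial derivative `u_i` of `u : ℝⁿ → ℝ` in the `i`-th coordinate direction. -/
noncomputable def pd {n : ℕ} (u : EuclideanSpace ℝ (Fin n) → ℝ) (i : Fin n)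
    (x : EuclideanSpace ℝ (Fin n)) : ℝ :=
  fderiv ℝ u x (EuclideanSpace.single i 1)

/-- `|∇u(x)|²`. -/
noncomputable def gradSq {n : ℕ} (u : EuclideanSpace ℝ (Fin n) → ℝ)
    (x : EuclideanSpace ℝ (Fin n)) : ℝ :=
  ∑ i, (pd u i x) ^ 2

/-- The minimal-surface/mean-curvature operator `div(∇u/√(1+|∇u|²))`. -/
noncomputable def mcOp {n : ℕ} (u : EuclideanSpace ℝ (Fin n) → ℝ)
    (x : EuclideanSpace ℝ (Fin n)) : ℝ :=
  ∑ i, pd (fun y => pd u i y / Real.sqrt (1 + gradSq u y)) i x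

/-- The P-function `P(x) = F(u(x)) - (1+|∇u(x)|²)^{-1/2}`. -/
noncomputable def Pfun {n : ℕ} (F : ℝ → ℝ) (u : EuclideanSpace ℝ (Fin n) → ℝ)
    (x : EuclideanSpace ℝ (Fin n)) : ℝ :=
  F (u x) - 1 / Real.sqrt (1 + gradSq u x)

/-!
Differentiating `P` gives `P_i = f(u) u_i + (1 + |∇u|²)^{-3/2} u_j u_{ij}`: the chain rule yields
`∂_i |∇u|² = 2 u_j u_{ji}`, and the symmetry of the Hessian turns `u_{ji}` into `u_{ij}`.
Multiplying this identity by `P_i` and summing over `i` gives the formula for `|∇P|²`.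
-/

open Finset

theorem sum_sq_eq_of_eq_add {ι R : Type*} [Fintype ι] [CommRing R] (A U V : ι → R) (a c : R)
    (h : ∀ i, A i = a * U i + c * V i) :
    ∑ i, A i ^ 2 = a * ∑ i, A i * U i + c * ∑ i, A i * V i := by
  rw [mul_sum, mul_sum, ← sum_add_distrib]
  exact sum_congr rfl fun i _ => by linear_combination A i * h i

theorem ContDiffAt.differentiableAt_fderiv {𝕜 E F : Type*} [NontriviallyNormedField 𝕜]
    [NormedAddCommGroup E] [NormedSpace 𝕜 E] [NormedAddCommGroup F] [NormedSpace 𝕜 F]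
    {g : E → F} {x : E} (h : ContDiffAt 𝕜 2 g x) : DifferentiableAt 𝕜 (fderiv 𝕜 g) x :=
  (h.fderiv_right (m := 1) le_rfl).differentiableAt one_ne_zero

theorem hasDerivAt_one_div_sqrt_one_add {t : ℝ} (ht : 0 < 1 + t) :
    HasDerivAt (fun s => 1 / √(1 + s)) (-(1 / (2 * ((1 + t) * √(1 + t))))) t := by
  simp only [one_div]
  refine ((((hasDerivAt_id' t).const_add 1).sqrt ht.ne').inv
    (Real.sqrt_pos.2 ht).ne').congr_deriv ?_
  rw [Real.sq_sqrt ht.le]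
  field_simp

section PartialDerivatives

variable {n : ℕ} {u : EuclideanSpace ℝ (Fin n) → ℝ} {x : EuclideanSpace ℝ (Fin n)}

theorem pd_eq_of_hasFDerivAt {L : EuclideanSpace ℝ (Fin n) →L[ℝ] ℝ} (h : HasFDerivAt u L x)
    (i : Fin n) : pd u i x = L (EuclideanSpace.single i 1) := by
  rw [pd, h.fderiv]

theorem hasFDerivAt_pd (h : DifferentiableAt ℝ (fderiv ℝ u) x) (i : Fin n) :
    HasFDerivAt (pd u i) ((fderiv ℝ (fderiv ℝ u) x).flip (EuclideanSpace.single i 1)) x :=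
  (h.hasFDerivAt.clm_apply (hasFDerivAt_const (EuclideanSpace.single i 1) x)).congr_fderiv
    (by simp)

theorem pd_pd_eq (h : DifferentiableAt ℝ (fderiv ℝ u) x) (i j : Fin n) :
    pd (pd u i) j x =
      fderiv ℝ (fderiv ℝ u) x (EuclideanSpace.single j 1) (EuclideanSpace.single i 1) :=
  pd_eq_of_hasFDerivAt (hasFDerivAt_pd h i) j

theorem pd_pd_comm (h : ContDiffAt ℝ 2 u x) (i j : Fin n) :
    pd (pd u i) j x = pd (pd u j) i x := by
  rw [pd_pd_eq h.differentiableAt_fderiv, pd_pd_eq h.differentiableAt_fderiv]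
  exact h.isSymmSndFDerivAt (by simp) _ _

theorem hasFDerivAt_gradSq (h : DifferentiableAt ℝ (fderiv ℝ u) x) :
    HasFDerivAt (gradSq u)
      (∑ j, (2 * pd u j x) • (fderiv ℝ (fderiv ℝ u) x).flip (EuclideanSpace.single j 1)) x := by
  refine HasFDerivAt.fun_sum fun j _ => ((hasFDerivAt_pd h j).pow 2).congr_fderiv ?_
  simp

theorem pd_gradSq (h : DifferentiableAt ℝ (fderiv ℝ u) x) (i : Fin n) :
    pd (gradSq u) i x = 2 * ∑ j, pd u j x * pd (pd u j) i x := by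
  simp [pd_eq_of_hasFDerivAt (hasFDerivAt_gradSq h), pd_pd_eq h, mul_sum, mul_assoc]

theorem pd_Pfun {F : ℝ → ℝ} {a : ℝ} (hF : HasDerivAt F a (u x)) (hu : ContDiffAt ℝ 2 u x)
    (i : Fin n) :
    pd (Pfun F u) i x = a * pd u i x +
      1 / ((1 + gradSq u x) * √(1 + gradSq u x)) * ∑ j, pd u j x * pd (pd u i) j x := by
  have hpos : 0 < 1 + gradSq u x := by
    unfold gradSq
    positivity
  have hDu := (hu.differentiableAt two_ne_zero).hasFDerivAt
  have hDgradSq := hasFDerivAt_gradSq hu.differentiableAt_fderiv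
  have hDP : HasFDerivAt (Pfun F u) _ x := (hF.comp_hasFDerivAt x hDu).sub
    ((hasDerivAt_one_div_sqrt_one_add hpos).comp_hasFDerivAt x hDgradSq)
  rw [pd_eq_of_hasFDerivAt hDP]
  simp only [sub_apply, smul_apply, smul_eq_mul,
    ← pd_eq_of_hasFDerivAt hDu, ← pd_eq_of_hasFDerivAt hDgradSq,
    pd_gradSq hu.differentiableAt_fderiv]
  rw [sum_congr rfl fun j _ => by rw [pd_pd_comm hu j i]]
  field_simp
  ring

end PartialDerivatives

theorem statement1_general {n : ℕ} (Ω : Set (EuclideanSpace ℝ (Fin n))) (hΩ : IsOpen Ω)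
    (u : EuclideanSpace ℝ (Fin n) → ℝ) (f F : ℝ → ℝ)
    (hu : ContDiffOn ℝ 3 u Ω)
    (hF : ∀ t, HasDerivAt F (f t) t)
    (x : EuclideanSpace ℝ (Fin n)) (hx : x ∈ Ω) :
    ∑ i, (pd (Pfun F u) i x) ^ 2 =
      f (u x) * (∑ i, pd (Pfun F u) i x * pd u i x) +
        (1 / ((1 + gradSq u x) * Real.sqrt (1 + gradSq u x))) *
          ∑ i, ∑ j, pd (Pfun F u) i x * pd u j x * pd (pd u i) j x := by
  have hu2 : ContDiffAt ℝ 2 u x := (hu.contDiffAt (hΩ.mem_nhds hx)).of_le (by norm_num)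
  rw [sum_sq_eq_of_eq_add _ _ _ _ _ fun i => pd_Pfun (hF (u x)) hu2 i]
  simp only [mul_sum, mul_assoc]

/-- `|∇P|² = f(u) ∇P·∇u + (1+|∇u|²)^{-3/2} P_i u_j u_{ij}` at noncritical
points of a solution of the prescribed mean curvature equation. -/
theorem statement1 {n : ℕ} (Ω : Set (EuclideanSpace ℝ (Fin n))) (hΩ : IsOpen Ω)
    (u : EuclideanSpace ℝ (Fin n) → ℝ) (f F : ℝ → ℝ)
    (hu : ContDiffOn ℝ 3 u Ω) (hf : ContDiff ℝ 1 f)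
    (hF : ∀ t, HasDerivAt F (f t) t)
    (hPDE : ∀ y ∈ Ω, mcOp u y + f (u y) = 0)
    (x : EuclideanSpace ℝ (Fin n)) (hx : x ∈ Ω)
    (hgrad : gradSq u x ≠ 0) :
    ∑ i, (pd (Pfun F u) i x) ^ 2 =
      f (u x) * (∑ i, pd (Pfun F u) i x * pd u i x) +
        (1 / ((1 + gradSq u x) * Real.sqrt (1 + gradSq u x))) *
          ∑ i, ∑ j, pd (Pfun F u) i x * pd u j x * pd (pd u i) j x :=
  statement1_general Ω hΩ u f F hu hF x hx
end
end

section
/- Let φ solve φ''/(1+φ'²)^{3/2} + f(φ) = 0 on ℝ⁺ with φ(0) = 0, φ'(0) = 1. Assume there exist L > 0 and a primitive F of f with f(L) = 0, F(L) = 0, F(l) < 0 for all l < L, and F(0) = √2/2 - 1. Then φ' > 0 on ℝ⁺, φ(t) → L, φ'(t) → 0, and φ''(t) → 0 as t → +∞. -/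
/-!
Along the solution, `F(φ) - (1 + φ'²)^(-1/2)` is a first integral; the initial data make it `-1`,
so `1 + F(φ) = (1 + φ'²)^(-1/2)` and `φ' = 0` exactly when `F(φ) = 0`. If `φ` ever reached `L`,
then `φ' = 0` there too, and backward uniqueness for `u = φ - L`, which satisfies
`|u''| ≤ K |u|` because `f` is Lipschitz with `f L = 0`, would force `φ(0) = L`. Hence `φ < L`,
so `F(φ) < 0`, `φ'` never vanishes and stays positive. The first integral also gives
`φ' ≥ -F(φ)`, which would keep `φ'` away from `0` if the increasing limit of `φ` were below `L`;
the limits of `φ'` and `φ''` then follow from the first integral and the equation.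
-/

open Filter Set Topology

section

variable {α δ : Type*} [ConditionallyCompleteLinearOrder α] [TopologicalSpace α] [OrderTopology α]
  [DenselyOrdered α] [LinearOrder δ] [TopologicalSpace δ] [OrderClosedTopology δ]

theorem ContinuousOn.lt_of_forall_ne {g : α → δ} {a : α} {c : δ} (hg : ContinuousOn g (Ici a))
    (ha : g a < c) (hne : ∀ t ≥ a, g t ≠ c) : ∀ t ≥ a, g t < c := by
  intro t ht
  by_contra! hct
  obtain ⟨s, hs, hsc⟩ := intermediate_value_Icc ht (hg.mono Icc_subset_Ici_self) ⟨ha.le, hct⟩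
  exact hne s hs.1 hsc

end

theorem constant_of_continuousOn_Ici_of_hasDerivAt_zero {g : ℝ → ℝ} {a : ℝ}
    (hg : ContinuousOn g (Ici a)) (hd : ∀ t > a, HasDerivAt g 0 t) : ∀ t ≥ a, g t = g a := by
  intro t ht
  rcases ht.eq_or_lt with rfl | hat
  · rfl
  obtain ⟨c, hc, hslope⟩ := exists_hasDerivAt_eq_slope g (fun _ => 0) hat
    (hg.mono Icc_subset_Ici_self) fun x hx => hd x hx.1
  rw [eq_comm, div_eq_zero_iff, sub_eq_zero] at hslope
  exact hslope.resolve_right (sub_ne_zero.2 hat.ne')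

theorem tendsto_atTop_of_eventually_le_deriv {φ : ℝ → ℝ} {δ : ℝ} (hφ : Differentiable ℝ φ)
    (hδ : 0 < δ) (h : ∀ᶠ t in atTop, δ ≤ deriv φ t) : Tendsto φ atTop atTop := by
  obtain ⟨T, hT⟩ := eventually_atTop.1 h
  have hlin : ∀ t ≥ T, φ T + δ * (t - T) ≤ φ t := by
    intro t ht
    have := (convex_Ici T).mul_sub_le_image_sub_of_le_deriv hφ.continuous.continuousOn
      hφ.differentiableOn (fun x hx => hT x (by rw [interior_Ici] at hx; exact hx.le))
      T self_mem_Ici t ht ht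
    linarith
  refine tendsto_atTop_mono' atTop (eventually_atTop.2 ⟨T, hlin⟩) ?_
  exact tendsto_atTop_add_const_left _ _
    ((tendsto_id.atTop_add tendsto_const_nhds).const_mul_atTop hδ)

theorem eq_zero_of_abs_deriv_deriv_le_mul_abs {u u' u'' : ℝ → ℝ} {a b K : ℝ} (hab : a ≤ b)
    (hu : ∀ t ∈ Icc a b, HasDerivAt u (u' t) t) (hu' : ∀ t ∈ Icc a b, HasDerivAt u' (u'' t) t)
    (hK : ∀ t ∈ Ioo a b, |u'' t| ≤ K * |u t|) (hb : u b = 0) (hb' : u' b = 0) : u a = 0 := by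
  set M := 1 + |K|
  -- `u² + u'²` grows at rate at most `M (u² + u'²)`, so this weighted version is nondecreasing
  set e : ℝ → ℝ := fun t => (u t ^ 2 + u' t ^ 2) * Real.exp (M * t)
  set e' : ℝ → ℝ := fun t =>
    (2 * u t * u' t + 2 * u' t * u'' t + M * (u t ^ 2 + u' t ^ 2)) * Real.exp (M * t)
  have he : ∀ t ∈ Icc a b, HasDerivAt e (e' t) t := by
    intro t ht
    have hexp : HasDerivAt (fun s => Real.exp (M * s)) (Real.exp (M * t) * M) t := by
      simpa using ((hasDerivAt_id t).const_mul M).exp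
    refine ((((hu t ht).fun_pow 2).fun_add ((hu' t ht).fun_pow 2)).fun_mul hexp).congr_deriv ?_
    norm_num [e']
    ring
  have he'_nonneg : ∀ t ∈ Ioo a b, 0 ≤ e' t := by
    intro t ht
    have h1 : -(|u t| * |u' t|) ≤ u t * u' t := by rw [← abs_mul]; exact neg_abs_le _
    have h2 : -(|u' t| * |u'' t|) ≤ u' t * u'' t := by rw [← abs_mul]; exact neg_abs_le _
    have h3 : |u' t| * |u'' t| ≤ |u' t| * (|K| * |u t|) :=
      mul_le_mul_of_nonneg_left ((hK t ht).trans (by gcongr; exact le_abs_self K)) (abs_nonneg _)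
    refine mul_nonneg ?_ (Real.exp_pos _).le
    nlinarith [sq_abs (u t), sq_abs (u' t), sq_nonneg (|u t| - |u' t|), abs_nonneg K]
  have hmono : MonotoneOn e (Icc a b) := by
    refine monotoneOn_of_hasDerivWithinAt_nonneg (convex_Icc a b) (f' := e')
      (fun t ht => (he t ht).continuousAt.continuousWithinAt) (fun t ht => ?_) (fun t ht => ?_)
    · rw [interior_Icc] at ht
      exact (he t (Ioo_subset_Icc_self ht)).hasDerivWithinAt
    · rw [interior_Icc] at ht
      exact he'_nonneg t ht
  have hea : e a ≤ 0 := by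
    simpa [e, hb, hb'] using hmono (left_mem_Icc.2 hab) (right_mem_Icc.2 hab) hab
  have : u a ^ 2 + u' a ^ 2 ≤ 0 := nonpos_of_mul_nonpos_left hea (Real.exp_pos _)
  nlinarith [sq_nonneg (u a), sq_nonneg (u' a)]

theorem tendsto_of_neg_comp_le_deriv {F φ : ℝ → ℝ} {L : ℝ} (hφ : Differentiable ℝ φ)
    (hF : Continuous F) (hFl : ∀ l < L, F l < 0) (hlt : ∀ t ≥ 0, φ t < L)
    (hderiv : ∀ t ≥ 0, -F (φ t) ≤ deriv φ t) : Tendsto φ atTop (𝓝 L) := by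
  have hmono : MonotoneOn φ (Ici 0) := by
    refine monotoneOn_of_deriv_nonneg (convex_Ici 0) hφ.continuous.continuousOn
      hφ.differentiableOn fun t ht => ?_
    rw [interior_Ici] at ht
    linarith [hderiv t ht.le, hFl _ (hlt t ht.le)]
  obtain ⟨l, hlim⟩ : ∃ l, Tendsto φ atTop (𝓝 l) := by
    have hg : Monotone fun t => φ (max t 0) := fun x y hxy =>
      hmono (le_max_right x 0) (le_max_right y 0) (max_le_max_right 0 hxy)
    have hbdd : BddAbove (range fun t => φ (max t 0)) :=
      ⟨L, by rintro _ ⟨t, rfl⟩; exact (hlt _ (le_max_right t 0)).le⟩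
    exact ⟨_, (tendsto_atTop_ciSup hg hbdd).congr' <|
      (eventually_ge_atTop 0).mono fun t ht => by rw [max_eq_left ht]⟩
  have hle : l ≤ L := le_of_tendsto hlim ((eventually_ge_atTop 0).mono fun t ht => (hlt t ht).le)
  rcases hle.lt_or_eq with hlL | rfl
  · have hFneg := hFl l hlL
    have hev : ∀ᶠ t in atTop, -F l / 2 ≤ deriv φ t := by
      filter_upwards [((hF.tendsto l).comp hlim).neg.eventually_const_lt
        (by linarith : -F l / 2 < -F l), eventually_ge_atTop 0] with t ht ht0
      exact ht.le.trans (hderiv t ht0)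
    exact absurd hlim (not_tendsto_nhds_of_tendsto_atTop
      (tendsto_atTop_of_eventually_le_deriv hφ (by linarith) hev) l)
  · exact hlim

theorem inv_sqrt_one_add_sq_eq_one_iff {v : ℝ} : (√(1 + v ^ 2))⁻¹ = 1 ↔ v = 0 := by
  rw [inv_eq_one, Real.sqrt_eq_one, add_eq_left, pow_eq_zero_iff two_ne_zero]

theorem one_sub_le_inv_sqrt_one_add_sq {v : ℝ} (hv : 0 ≤ v) : 1 - v ≤ (√(1 + v ^ 2))⁻¹ := by
  have hs : √(1 + v ^ 2) ≤ 1 + v :=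
    Real.sqrt_le_iff.2 ⟨by linarith, by nlinarith⟩
  calc 1 - v ≤ (1 + v)⁻¹ := by
        rw [← one_div, le_div_iff₀ (by positivity)]
        nlinarith
    _ ≤ (√(1 + v ^ 2))⁻¹ := inv_anti₀ (by positivity) hs

theorem eq_sqrt_inv_sq_sub_one {v w : ℝ} (hv : 0 ≤ v) (hw : w = (√(1 + v ^ 2))⁻¹) :
    v = √(w⁻¹ ^ 2 - 1) := by
  rw [hw, inv_inv, Real.sq_sqrt (by positivity), add_sub_cancel_left, Real.sqrt_sq hv]

namespace PrescribedCurvature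

noncomputable def curvature (φ : ℝ → ℝ) (t : ℝ) : ℝ :=
  deriv (deriv φ) t / ((1 + deriv φ t ^ 2) * √(1 + deriv φ t ^ 2))

noncomputable def energy (F φ : ℝ → ℝ) (t : ℝ) : ℝ :=
  F (φ t) - (√(1 + deriv φ t ^ 2))⁻¹

variable {f F φ : ℝ → ℝ}

theorem deriv_deriv_eq_of_curvature_add_eq_zero {t c : ℝ} (h : curvature φ t + c = 0) :
    deriv (deriv φ) t = -c * ((1 + deriv φ t ^ 2) * √(1 + deriv φ t ^ 2)) := by
  have hpos : 0 < (1 + deriv φ t ^ 2) * √(1 + deriv φ t ^ 2) := by positivity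
  rw [curvature, ← eq_neg_iff_add_eq_zero, div_eq_iff hpos.ne'] at h
  exact h

theorem hasDerivAt_energy {t : ℝ} (hF : HasDerivAt F (f (φ t)) (φ t))
    (hφ : DifferentiableAt ℝ φ t) (hφ' : DifferentiableAt ℝ (deriv φ) t) :
    HasDerivAt (energy F φ) (deriv φ t * (curvature φ t + f (φ t))) t := by
  have hpos : 0 < 1 + deriv φ t ^ 2 := by positivity
  have hsq := ((hφ'.hasDerivAt.fun_pow 2).const_add 1).sqrt hpos.ne'
  have := (hF.comp t hφ.hasDerivAt).sub (hsq.inv (Real.sqrt_pos.2 hpos).ne')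
  refine this.congr_deriv ?_
  rw [curvature]
  norm_num
  field_simp
  linear_combination (-(deriv φ t * deriv (deriv φ) t)) * Real.sq_sqrt hpos.le

theorem energy_eq_energy_zero (hF : ∀ x, HasDerivAt F (f x) x) (hφ : ContDiff ℝ 2 φ)
    (hode : ∀ t > 0, curvature φ t + f (φ t) = 0) : ∀ t ≥ 0, energy F φ t = energy F φ 0 := by
  have hφ' : ContDiff ℝ 1 (deriv φ) := hφ.iterate_deriv' 1 1
  have hd : ∀ t, HasDerivAt (energy F φ) (deriv φ t * (curvature φ t + f (φ t))) t := fun t =>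
    hasDerivAt_energy (hF (φ t)) (hφ.differentiable two_ne_zero t)
      (hφ'.differentiable one_ne_zero t)
  refine constant_of_continuousOn_Ici_of_hasDerivAt_zero
    (fun t _ => (hd t).continuousAt.continuousWithinAt) fun t ht => ?_
  simpa [hode t ht] using hd t

theorem apply_zero_eq_of_apply_eq_of_deriv_eq_zero (hf : ContDiff ℝ 1 f) (hφ : ContDiff ℝ 2 φ)
    (hode : ∀ t > 0, curvature φ t + f (φ t) = 0) {L t₁ : ℝ} (hfL : f L = 0) (ht₁ : 0 ≤ t₁)
    (hφt₁ : φ t₁ = L) (hφ't₁ : deriv φ t₁ = 0) : φ 0 = L := by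
  have hφ' : ContDiff ℝ 1 (deriv φ) := hφ.iterate_deriv' 1 1
  have hφ'c := hφ'.continuous
  obtain ⟨C, hC⟩ := hf.locallyLipschitz.locallyLipschitzOn.exists_lipschitzOnWith_of_compact
    ((isCompact_Icc (a := 0) (b := t₁)).image hφ.continuous)
  obtain ⟨B, hB⟩ := (isCompact_Icc (a := 0) (b := t₁)).exists_bound_of_continuousOn
    (f := fun t => (1 + deriv φ t ^ 2) * √(1 + deriv φ t ^ 2)) (by fun_prop)
  have hbound : ∀ t ∈ Ioo 0 t₁, |deriv (deriv φ) t| ≤ C * B * |φ t - L| := by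
    intro t ht
    have hmem : t ∈ Icc 0 t₁ := Ioo_subset_Icc_self ht
    have hfφ : |f (φ t)| ≤ C * |φ t - L| := by
      simpa [hfL, Real.dist_eq] using hC.dist_le_mul _ (mem_image_of_mem φ hmem) _
        ⟨t₁, right_mem_Icc.2 ht₁, hφt₁⟩
    rw [deriv_deriv_eq_of_curvature_add_eq_zero (hode t ht.1), abs_mul, abs_neg]
    calc _ ≤ C * |φ t - L| * B := mul_le_mul hfφ (hB t hmem) (abs_nonneg _) (by positivity)
      _ = _ := by ring
  have := eq_zero_of_abs_deriv_deriv_le_mul_abs (u := fun t => φ t - L) ht₁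
    (fun t _ => (hφ.differentiable two_ne_zero t).hasDerivAt.sub_const L)
    (fun t _ => (hφ'.differentiable one_ne_zero t).hasDerivAt) hbound (by simp [hφt₁]) hφ't₁
  exact sub_eq_zero.1 this

theorem one_add_comp_eq_inv_sqrt_one_add_deriv_sq (hF : ∀ x, HasDerivAt F (f x) x)
    (hφ : ContDiff ℝ 2 φ) (hode : ∀ t > 0, curvature φ t + f (φ t) = 0) (h0 : φ 0 = 0)
    (h1 : deriv φ 0 = 1) (hF0 : F 0 = √2 / 2 - 1) :
    ∀ t ≥ 0, 1 + F (φ t) = (√(1 + deriv φ t ^ 2))⁻¹ := by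
  intro t ht
  have hE := energy_eq_energy_zero hF hφ hode t ht
  have hinv : (√2)⁻¹ = √2 / 2 := by rw [inv_eq_one_div, ← Real.sqrt_div_self']
  rw [energy, energy, h0, h1, hF0] at hE
  norm_num [hinv] at hE
  linarith

theorem tendsto_deriv_of_one_add_comp_eq {L : ℝ} (hF : Continuous F) (hFL : F L = 0)
    (hlim : Tendsto φ atTop (𝓝 L)) (hpos : ∀ t ≥ 0, 0 < deriv φ t)
    (hfirst : ∀ t ≥ 0, 1 + F (φ t) = (√(1 + deriv φ t ^ 2))⁻¹) :
    Tendsto (deriv φ) atTop (𝓝 0) := by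
  have hw : Tendsto (fun t => 1 + F (φ t)) atTop (𝓝 1) := by
    simpa [hFL] using ((hF.tendsto L).comp hlim).const_add 1
  have : Tendsto (fun t => √((1 + F (φ t))⁻¹ ^ 2 - 1)) atTop (𝓝 0) := by
    simpa using ((hw.inv₀ one_ne_zero).pow 2 |>.sub_const 1).sqrt
  exact this.congr' <| (eventually_ge_atTop 0).mono fun t ht =>
    (eq_sqrt_inv_sq_sub_one (hpos t ht).le (hfirst t ht)).symm

theorem tendsto_deriv_deriv_of_tendsto {L : ℝ} (hf : Continuous f)
    (hode : ∀ t > 0, curvature φ t + f (φ t) = 0) (hfL : f L = 0)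
    (hlim : Tendsto φ atTop (𝓝 L)) (hφ'lim : Tendsto (deriv φ) atTop (𝓝 0)) :
    Tendsto (deriv (deriv φ)) atTop (𝓝 0) := by
  have hv : Tendsto (fun t => 1 + deriv φ t ^ 2) atTop (𝓝 1) := by
    simpa using (hφ'lim.pow 2).const_add 1
  have : Tendsto (fun t => -f (φ t) * ((1 + deriv φ t ^ 2) * √(1 + deriv φ t ^ 2))) atTop
      (𝓝 0) := by
    simpa [hfL] using ((hf.tendsto L).comp hlim).neg.mul (hv.mul hv.sqrt)
  exact this.congr' <| (eventually_gt_atTop 0).mono fun t ht =>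
    (deriv_deriv_eq_of_curvature_add_eq_zero (hode t ht)).symm

end PrescribedCurvature

open PrescribedCurvature

/-- if `f(L)=0`, `F(L)=0 > F(l)` for `l < L` and `F(0)=√2/2-1`, then the
solution of the ODE with `φ(0)=0`, `φ'(0)=1` is strictly increasing and satisfies
`φ(t) → L`, `φ'(t) → 0`, `φ''(t) → 0` as `t → +∞`. -/
theorem statement8 (f F φ : ℝ → ℝ) (L : ℝ)
    (hf : ContDiff ℝ 1 f) (hφ : ContDiff ℝ 2 φ)
    (hF : ∀ t, HasDerivAt F (f t) t)
    (hode : ∀ t > (0 : ℝ),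
      deriv (deriv φ) t /
          ((1 + (deriv φ t) ^ 2) * Real.sqrt (1 + (deriv φ t) ^ 2)) + f (φ t) = 0)
    (h0 : φ 0 = 0) (h1 : deriv φ 0 = 1)
    (hL : 0 < L) (hfL : f L = 0) (hFL : F L = 0)
    (hFl : ∀ l < L, F l < 0)
    (hF0 : F 0 = Real.sqrt 2 / 2 - 1) :
    (∀ t > (0 : ℝ), 0 < deriv φ t) ∧
    Tendsto φ atTop (nhds L) ∧
    Tendsto (deriv φ) atTop (nhds 0) ∧
    Tendsto (deriv (deriv φ)) atTop (nhds 0) := by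
  have hφ'c : Continuous (deriv φ) := hφ.continuous_deriv one_le_two
  have hFc : Continuous F := continuous_iff_continuousAt.2 fun x => (hF x).continuousAt
  have hfirst := one_add_comp_eq_inv_sqrt_one_add_deriv_sq hF hφ hode h0 h1 hF0
  have hderiv_eq_zero_iff : ∀ t ≥ 0, deriv φ t = 0 ↔ F (φ t) = 0 := fun t ht => by
    rw [← inv_sqrt_one_add_sq_eq_one_iff, ← hfirst t ht, add_eq_left]
  have hlt : ∀ t ≥ 0, φ t < L := hφ.continuous.continuousOn.lt_of_forall_ne (by rwa [h0])
    fun t ht htL => hL.ne <| h0 ▸ apply_zero_eq_of_apply_eq_of_deriv_eq_zero hf hφ hode hfL ht htL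
      ((hderiv_eq_zero_iff t ht).2 (htL ▸ hFL))
  have hpos : ∀ t ≥ 0, 0 < deriv φ t := by
    have := hφ'c.neg.continuousOn.lt_of_forall_ne (a := 0) (c := 0) (by simp [h1])
      fun t ht h => (hFl _ (hlt t ht)).ne ((hderiv_eq_zero_iff t ht).1 (neg_eq_zero.1 h))
    exact fun t ht => neg_lt_zero.1 (this t ht)
  have hlim : Tendsto φ atTop (𝓝 L) :=
    tendsto_of_neg_comp_le_deriv (hφ.differentiable two_ne_zero) hFc hFl hlt fun t ht => by
      linarith [hfirst t ht ▸ one_sub_le_inv_sqrt_one_add_sq (hpos t ht).le]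
  have hφ'lim := tendsto_deriv_of_one_add_comp_eq hFc hFL hlim hpos hfirst
  exact ⟨fun t ht => hpos t ht.le, hlim, hφ'lim,
    tendsto_deriv_deriv_of_tendsto hf.continuous hode hfL hlim hφ'lim⟩
end

section
/- Let u_∞ ≥ 0 be a C² solution of the minimal surface equation div(∇u_∞/√(1+|∇u_∞|²)) = 0 on a connected open set, with |∇u_∞| ≡ a constant a > 0 on a connected component Ω̃. Then u_∞ is harmonic on Ω̃ and in fact affine: after rotation, u_∞(x) = a x_n + c on Ω̃. -/
/-!
Since `|∇u| ≡ a`, the minimal surface operator reduces to `Δu / √(1 + a²)`, so `u` is harmonic.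
Differentiating `|∇u|² ≡ a²` gives `D²u ∇u = 0`; by Grönwall, `∇u` is then constant along each
straight line `t ↦ y + t ∇u(y)`. Differentiating `∇u(y + t ∇u(y)) = ∇u(y)` in `y` at `x` gives
`D²u(xₜ) (1 + t D²u(x)) = D²u(x)` with `xₜ = x + t ∇u(x)`; taking traces and using harmonicity
at `x` and `xₜ` leaves `tr (D²u(xₜ) D²u(x)) = 0` for small `t > 0`, and letting `t → 0` gives
`|D²u(x)|² = tr (D²u(x)²) = 0`. Hence `∇u` is constant on the connected set and `u` is affine.
Only `C²` regularity is used: the Bochner-formula proof would need third derivatives.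
-/

noncomputable section

open Set Filter InnerProductSpace
open scoped Topology Gradient RealInnerProductSpace

section Gradient

variable {E : Type*} [NormedAddCommGroup E] [InnerProductSpace ℝ E] [CompleteSpace E]
  {u : E → ℝ} {x : E}

theorem ContDiffAt.gradient {m n : WithTop ℕ∞} (hu : ContDiffAt ℝ n u x) (hmn : m + 1 ≤ n) :
    ContDiffAt ℝ m (∇ u) x :=
  (toDual ℝ E).symm.contDiff.contDiffAt.comp x (hu.fderiv_right hmn)

theorem inner_fderiv_gradient_apply (v w : E) :
    ⟪fderiv ℝ (∇ u) x v, w⟫ = fderiv ℝ (fderiv ℝ u) x v w := by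
  have h : ∇ u = (toDual ℝ E).symm ∘ fderiv ℝ u := rfl
  rw [h, LinearIsometryEquiv.comp_fderiv]
  exact toDual_symm_apply

theorem ContDiffAt.isSymmetric_fderiv_gradient (hu : ContDiffAt ℝ 2 u x) :
    (fderiv ℝ (∇ u) x : E →ₗ[ℝ] E).IsSymmetric := fun v w => by
  rw [ContinuousLinearMap.coe_coe, real_inner_comm (fderiv ℝ (∇ u) x w) v,
    inner_fderiv_gradient_apply, inner_fderiv_gradient_apply,
    hu.isSymmSndFDerivAt (by simp) v w]

theorem ContDiffAt.fderiv_gradient_apply_gradient_eq_zero {a : ℝ} (hu : ContDiffAt ℝ 2 u x)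
    (hnorm : ∀ᶠ y in 𝓝 x, ‖∇ u y‖ = a) : fderiv ℝ (∇ u) x (∇ u x) = 0 := by
  set H := fderiv ℝ (∇ u) x
  have hH : HasFDerivAt (∇ u) H x :=
    ((hu.gradient (by norm_num)).differentiableAt one_ne_zero).hasFDerivAt
  have hconst : (fun y => ⟪∇ u y, ∇ u y⟫) =ᶠ[𝓝 x] fun _ => a ^ 2 := by
    filter_upwards [hnorm] with y hy
    rw [real_inner_self_eq_norm_sq, hy]
  have hzero : (fderivInnerCLM ℝ (∇ u x, ∇ u x)).comp (H.prod H) = 0 :=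
    (hH.inner ℝ hH).unique (hconst.hasFDerivAt_iff.2 (hasFDerivAt_const _ _))
  refine ext_inner_right ℝ fun v => ?_
  have hv := congr($hzero v)
  simp only [ContinuousLinearMap.comp_apply, ContinuousLinearMap.prod_apply,
    fderivInnerCLM_apply, zero_apply] at hv
  have hsymm : ⟪H (∇ u x), v⟫ = ⟪∇ u x, H v⟫ := hu.isSymmetric_fderiv_gradient _ _
  rw [inner_zero_left, hsymm]
  linarith [real_inner_comm (H v) (∇ u x)]

end Gradient

section StraightLines

variable {E : Type*} [NormedAddCommGroup E] [NormedSpace ℝ E] {G : E → E} {Ω : Set E}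

theorem apply_add_smul_eq_of_fderiv_apply_self_eq_zero (hΩ : IsOpen Ω)
    (hG : ContDiffOn ℝ 1 G Ω) (hGG : ∀ z ∈ Ω, fderiv ℝ G z (G z) = 0) {y : E} {T : ℝ}
    (hseg : ∀ t ∈ Icc 0 T, y + t • G y ∈ Ω) : ∀ t ∈ Icc 0 T, G (y + t • G y) = G y := by
  set γ : ℝ → E := fun t => y + t • G y
  have hγ : Continuous γ := by fun_prop
  have hγ' (t : ℝ) : HasDerivAt γ (G y) t := by
    simpa [γ] using ((hasDerivAt_id t).smul_const (G y)).const_add y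
  have hDG : ∀ z ∈ Ω, HasFDerivAt G (fderiv ℝ G z) z := fun z hz =>
    ((hG.contDiffAt (hΩ.mem_nhds hz)).differentiableAt one_ne_zero).hasFDerivAt
  obtain ⟨K, hK⟩ := isCompact_Icc.exists_bound_of_continuousOn
    ((hG.continuousOn_fderiv_of_isOpen hΩ le_rfl).comp hγ.continuousOn hseg)
  intro t ht
  refine sub_eq_zero.1 (eq_zero_of_abs_deriv_le_mul_abs_self_of_eq_zero_right
    (f := fun t => G (γ t) - G y) (f' := fun t => fderiv ℝ G (γ t) (G y)) (K := K)
    ((hG.continuousOn.comp hγ.continuousOn hseg).sub continuousOn_const) (fun s hs => ?_)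
    (by simp [γ]) (fun s hs => ?_) t ht)
  · exact (((hDG _ (hseg s (Ico_subset_Icc_self hs))).comp_hasDerivAt s (hγ' s)).sub_const
      _).hasDerivWithinAt
  · -- `fderiv ℝ G (γ s)` kills `G (γ s)`, so it sees only the deviation `G (γ s) - G y`
    calc ‖fderiv ℝ G (γ s) (G y)‖ = ‖fderiv ℝ G (γ s) (G (γ s) - G y)‖ := by
          rw [map_sub, hGG _ (hseg s (Ico_subset_Icc_self hs)), zero_sub, norm_neg]
      _ ≤ ‖fderiv ℝ G (γ s)‖ * ‖G (γ s) - G y‖ := ContinuousLinearMap.le_opNorm _ _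
      _ ≤ K * ‖G (γ s) - G y‖ := by gcongr; exact hK s (Ico_subset_Icc_self hs)

theorem eventually_forall_add_smul_mem (hΩ : IsOpen Ω) {x : E} (hx : x ∈ Ω)
    (hG : ContinuousAt G x) :
    ∀ᶠ t in 𝓝[>] (0 : ℝ), ∀ᶠ z in 𝓝 x, ∀ s ∈ Icc 0 t, z + s • G z ∈ Ω := by
  have hcont : ContinuousAt (fun p : E × ℝ => p.1 + p.2 • G p.1) (x, 0) :=
    continuousAt_fst.add (continuousAt_snd.smul (hG.comp continuousAt_fst))
  have hmem : ∀ᶠ p in 𝓝 x ×ˢ 𝓝 (0 : ℝ), p.1 + p.2 • G p.1 ∈ Ω := by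
    rw [← nhds_prod_eq]
    exact hcont.preimage_mem_nhds (by simpa using hΩ.mem_nhds hx)
  obtain ⟨pz, hpz, ps, hps, hp⟩ := eventually_prod_iff.1 hmem
  obtain ⟨δ, hδ, hδs⟩ := Metric.eventually_nhds_iff.1 hps
  filter_upwards [Ioo_mem_nhdsGT hδ] with t ht
  filter_upwards [hpz] with z hz s hs
  refine hp hz (hδs ?_)
  rw [Real.dist_eq, sub_zero, abs_of_nonneg hs.1]
  exact hs.2.trans_lt ht.2

theorem eventually_fderiv_add_smul_comp_eq (hΩ : IsOpen Ω) (hG : ContDiffOn ℝ 1 G Ω)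
    (hGG : ∀ z ∈ Ω, fderiv ℝ G z (G z) = 0) {x : E} (hx : x ∈ Ω) :
    ∀ᶠ t in 𝓝[>] (0 : ℝ), x + t • G x ∈ Ω ∧
      (fderiv ℝ G (x + t • G x)).comp (ContinuousLinearMap.id ℝ E + t • fderiv ℝ G x) =
        fderiv ℝ G x := by
  have hDG : ∀ z ∈ Ω, HasFDerivAt G (fderiv ℝ G z) z := fun z hz =>
    ((hG.contDiffAt (hΩ.mem_nhds hz)).differentiableAt one_ne_zero).hasFDerivAt
  filter_upwards [eventually_forall_add_smul_mem hΩ hx (hDG x hx).continuousAt,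
    self_mem_nhdsWithin] with t ht (htpos : 0 < t)
  have hxt : x + t • G x ∈ Ω := ht.self_of_nhds t ⟨htpos.le, le_rfl⟩
  have hflow : (fun z => G (z + t • G z)) =ᶠ[𝓝 x] G := by
    filter_upwards [ht] with z hz
    exact apply_add_smul_eq_of_fderiv_apply_self_eq_zero hΩ hG hGG hz t ⟨htpos.le, le_rfl⟩
  have hcomp := (hDG _ hxt).comp x ((hasFDerivAt_id x).add ((hDG x hx).const_smul t))
  exact ⟨hxt, (hflow.hasFDerivAt_iff.1 hcomp).unique (hDG x hx)⟩

end StraightLines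

theorem LinearMap.IsSymmetric.eq_zero_of_trace_comp_self_eq_zero {E : Type*}
    [NormedAddCommGroup E] [InnerProductSpace ℝ E] [FiniteDimensional ℝ E] {A : E →ₗ[ℝ] E}
    (hA : A.IsSymmetric) (h : LinearMap.trace ℝ E (A ∘ₗ A) = 0) : A = 0 := by
  set b := stdOrthonormalBasis ℝ E
  have hsum : ∑ i, ‖A (b i)‖ ^ 2 = 0 := by
    rw [← h, LinearMap.trace_eq_sum_inner _ b]
    refine Finset.sum_congr rfl fun i _ => ?_
    rw [LinearMap.comp_apply, ← hA, real_inner_self_eq_norm_sq]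
  refine b.toBasis.ext fun i => ?_
  have hi := (Finset.sum_eq_zero_iff_of_nonneg fun i _ => by positivity).1 hsum i
    (Finset.mem_univ i)
  simpa using hi

section Hessian

variable {E : Type*} [NormedAddCommGroup E] [InnerProductSpace ℝ E] [FiniteDimensional ℝ E]
  {u : E → ℝ} {Ω : Set E} {x : E}

theorem fderiv_gradient_eq_zero_of_norm_gradient_eq (hΩ : IsOpen Ω) (hu : ContDiffOn ℝ 2 u Ω)
    {a : ℝ} (hnorm : ∀ y ∈ Ω, ‖∇ u y‖ = a)
    (htr : ∀ y ∈ Ω, LinearMap.trace ℝ E (fderiv ℝ (∇ u) y) = 0) (hx : x ∈ Ω) :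
    fderiv ℝ (∇ u) x = 0 := by
  have hcd : ∀ y ∈ Ω, ContDiffAt ℝ 2 u y := fun y hy => hu.contDiffAt (hΩ.mem_nhds hy)
  have hG : ContDiffOn ℝ 1 (∇ u) Ω := fun y hy => ((hcd y hy).gradient le_rfl).contDiffWithinAt
  have hGG : ∀ z ∈ Ω, fderiv ℝ (∇ u) z (∇ u z) = 0 := fun z hz =>
    (hcd z hz).fderiv_gradient_apply_gradient_eq_zero (eventually_of_mem (hΩ.mem_nhds hz) hnorm)
  set φ : ℝ → ℝ := fun t =>
    LinearMap.trace ℝ E (fderiv ℝ (∇ u) (x + t • ∇ u x) ∘L fderiv ℝ (∇ u) x)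
  have hφ : ∀ᶠ t in 𝓝[>] (0 : ℝ), φ t = 0 := by
    filter_upwards [eventually_fderiv_add_smul_comp_eq hΩ hG hGG hx, self_mem_nhdsWithin]
      with t ⟨hxt, hid⟩ (htpos : 0 < t)
    have htrace := congrArg (fun L : E →L[ℝ] E => LinearMap.trace ℝ E L) hid
    simp only [ContinuousLinearMap.comp_add, ContinuousLinearMap.comp_id,
      ContinuousLinearMap.comp_smul, ContinuousLinearMap.toLinearMap_add,
      ContinuousLinearMap.toLinearMap_smul, map_add, map_smul, smul_eq_mul] at htrace
    rw [htr _ hxt, htr x hx, zero_add] at htrace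
    exact (mul_eq_zero.1 htrace).resolve_left htpos.ne'
  have hlim : Tendsto φ (𝓝[>] 0)
      (𝓝 (LinearMap.trace ℝ E (fderiv ℝ (∇ u) x ∘L fderiv ℝ (∇ u) x))) := by
    have htrace : Continuous fun L : E →L[ℝ] E => LinearMap.trace ℝ E L :=
      LinearMap.continuous_of_finiteDimensional
        ((LinearMap.trace ℝ E).comp (ContinuousLinearMap.coeLM ℝ))
    have hH : ContinuousAt (fderiv ℝ (∇ u)) (x + (0 : ℝ) • ∇ u x) := by
      rw [zero_smul, add_zero]
      exact (hG.continuousOn_fderiv_of_isOpen hΩ le_rfl).continuousAt (hΩ.mem_nhds hx)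
    have hφc : ContinuousAt φ 0 := htrace.continuousAt.comp
      ((hH.comp (f := fun t : ℝ => x + t • ∇ u x) (by fun_prop)).clm_comp continuousAt_const)
    simpa [φ] using hφc.tendsto.mono_left nhdsWithin_le_nhds
  have hsq : LinearMap.trace ℝ E ((fderiv ℝ (∇ u) x : E →ₗ[ℝ] E) ∘ₗ fderiv ℝ (∇ u) x) = 0 :=
    tendsto_nhds_unique hlim (tendsto_const_nhds.congr' (hφ.mono fun t ht => ht.symm))
  exact ContinuousLinearMap.coe_injective
    ((hcd x hx).isSymmetric_fderiv_gradient.eq_zero_of_trace_comp_self_eq_zero hsq)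

end Hessian

theorem IsOpen.exists_eq_inner_add_of_gradient_eq {E : Type*} [NormedAddCommGroup E]
    [InnerProductSpace ℝ E] [CompleteSpace E] {u : E → ℝ} {Ω : Set E} (hΩ : IsOpen Ω)
    (hΩc : IsPreconnected Ω) (hu : DifferentiableOn ℝ u Ω) {b : E}
    (hb : ∀ y ∈ Ω, ∇ u y = b) : ∃ c, ∀ y ∈ Ω, u y = ⟪b, y⟫ + c :=
  hΩ.exists_eq_add_of_fderiv_eq hΩc hu (innerSL ℝ b).differentiable.differentiableOn
    fun y hy => by
      ext v
      rw [← inner_gradient_left, hb y hy]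
      show ⟪b, v⟫ = fderiv ℝ (innerSL ℝ b) y v
      rw [(innerSL ℝ b).fderiv, innerSL_apply_apply]

section Euclidean

variable {n : ℕ} {u : EuclideanSpace ℝ (Fin n) → ℝ} {x : EuclideanSpace ℝ (Fin n)}

theorem pd_eq_inner_gradient (i : Fin n) : pd u i x = ⟪∇ u x, EuclideanSpace.single i 1⟫ :=
  inner_gradient_left.symm

theorem gradSq_eq_norm_gradient_sq : gradSq u x = ‖∇ u x‖ ^ 2 := by
  rw [EuclideanSpace.norm_sq_eq, gradSq]
  refine Finset.sum_congr rfl fun i _ => ?_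
  rw [pd_eq_inner_gradient, EuclideanSpace.inner_single_right, Real.norm_eq_abs, sq_abs]
  simp

theorem ContDiffAt.sum_pd_pd_eq_trace (hu : ContDiffAt ℝ 2 u x) :
    ∑ i, pd (pd u i) i x = LinearMap.trace ℝ (EuclideanSpace ℝ (Fin n)) (fderiv ℝ (∇ u) x) := by
  rw [LinearMap.trace_eq_sum_inner _ (EuclideanSpace.basisFun (Fin n) ℝ)]
  refine Finset.sum_congr rfl fun i _ => ?_
  have hH : HasFDerivAt (∇ u) (fderiv ℝ (∇ u) x) x :=
    ((hu.gradient le_rfl).differentiableAt one_ne_zero).hasFDerivAt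
  have hpd : pd u i = fun y => ⟪∇ u y, EuclideanSpace.single i 1⟫ :=
    funext fun y => pd_eq_inner_gradient i
  rw [pd, hpd, (hH.inner ℝ (hasFDerivAt_const _ x)).fderiv]
  simp [real_inner_comm]

theorem mcOp_eq_of_gradSq_eventuallyEq {a : ℝ} (hgrad : ∀ᶠ y in 𝓝 x, gradSq u y = a ^ 2) :
    mcOp u x = (√(1 + a ^ 2))⁻¹ * ∑ i, pd (pd u i) i x := by
  rw [mcOp, Finset.mul_sum]
  refine Finset.sum_congr rfl fun i _ => ?_
  have hloc : (fun y => pd u i y / √(1 + gradSq u y)) =ᶠ[𝓝 x] (√(1 + a ^ 2))⁻¹ • pd u i := by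
    filter_upwards [hgrad] with y hy
    rw [hy, Pi.smul_apply, smul_eq_mul, div_eq_inv_mul]
  rw [pd, hloc.fderiv_eq, fderiv_const_smul_field]
  rfl

end Euclidean

theorem statement11_general {n : ℕ} (Ω : Set (EuclideanSpace ℝ (Fin n))) (hΩ : IsOpen Ω)
    (hconn : IsConnected Ω)
    (u : EuclideanSpace ℝ (Fin n) → ℝ) (a : ℝ) (ha : 0 < a)
    (hu : ContDiffOn ℝ 2 u Ω)
    (hPDE : ∀ x ∈ Ω, mcOp u x = 0)
    (hgrad : ∀ x ∈ Ω, gradSq u x = a ^ 2) :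
    (∀ x ∈ Ω, ∑ i, pd (pd u i) i x = 0) ∧
    ∃ (e : EuclideanSpace ℝ (Fin n)) (c : ℝ), ‖e‖ = 1 ∧
      ∀ x ∈ Ω, u x = a * (inner ℝ e x : ℝ) + c := by
  have hcd : ∀ x ∈ Ω, ContDiffAt ℝ 2 u x := fun x hx => hu.contDiffAt (hΩ.mem_nhds hx)
  have hnorm : ∀ x ∈ Ω, ‖∇ u x‖ = a := fun x hx => by
    have h := hgrad x hx
    rwa [gradSq_eq_norm_gradient_sq, sq_eq_sq₀ (norm_nonneg _) ha.le] at h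
  have hharm : ∀ x ∈ Ω, ∑ i, pd (pd u i) i x = 0 := fun x hx => by
    have h := hPDE x hx
    rw [mcOp_eq_of_gradSq_eventuallyEq (eventually_of_mem (hΩ.mem_nhds hx) hgrad)] at h
    exact (mul_eq_zero.1 h).resolve_left (by positivity)
  refine ⟨hharm, ?_⟩
  have hhess : ∀ x ∈ Ω, fderiv ℝ (∇ u) x = 0 := fun x hx =>
    fderiv_gradient_eq_zero_of_norm_gradient_eq hΩ hu hnorm
      (fun y hy => (hcd y hy).sum_pd_pd_eq_trace ▸ hharm y hy) hx
  obtain ⟨b, hb⟩ := hΩ.exists_is_const_of_fderiv_eq_zero hconn.isPreconnected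
    (fun y hy =>
      (((hcd y hy).gradient le_rfl).differentiableAt one_ne_zero).differentiableWithinAt) hhess
  obtain ⟨c, hc⟩ := hΩ.exists_eq_inner_add_of_gradient_eq hconn.isPreconnected
    (fun y hy => ((hcd y hy).differentiableAt two_ne_zero).differentiableWithinAt) hb
  obtain ⟨x₀, hx₀⟩ := hconn.nonempty
  have hba : ‖b‖ = a := hb x₀ hx₀ ▸ hnorm x₀ hx₀
  refine ⟨a⁻¹ • b, c, ?_, fun x hx => ?_⟩
  · rw [norm_smul, hba, norm_inv, Real.norm_of_nonneg ha.le, inv_mul_cancel₀ ha.ne']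
  · rw [hc x hx, real_inner_smul_left, mul_inv_cancel_left₀ ha.ne']

/-- a nonnegative solution of the minimal surface equation with
`|∇u| ≡ a > 0` on a connected open set is harmonic there, and in fact affine:
`u(x) = a ⟨e,x⟩ + c` for some unit vector `e`. -/
theorem statement11 {n : ℕ} (Ω : Set (EuclideanSpace ℝ (Fin n))) (hΩ : IsOpen Ω)
    (hconn : IsConnected Ω)
    (u : EuclideanSpace ℝ (Fin n) → ℝ) (a : ℝ) (ha : 0 < a)
    (hu : ContDiffOn ℝ 2 u Ω) (hnn : ∀ x ∈ Ω, 0 ≤ u x)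
    (hPDE : ∀ x ∈ Ω, mcOp u x = 0)
    (hgrad : ∀ x ∈ Ω, gradSq u x = a ^ 2) :
    (∀ x ∈ Ω, ∑ i, pd (pd u i) i x = 0) ∧
    ∃ (e : EuclideanSpace ℝ (Fin n)) (c : ℝ), ‖e‖ = 1 ∧
      ∀ x ∈ Ω, u x = a * (inner ℝ e x : ℝ) + c :=
  statement11_general Ω hΩ hconn u a ha hu hPDE hgrad
end
end

section
/- Let (Σ, g) be the graph of a C³ function u : Ω → ℝ with induced metric g_{ij} = δ_{ij} + u_i u_j, and W = √(1+|∇u|²). If u solves the prescribed mean curvature equation div(∇u/√(1+|∇u|²)) + f(u) = 0 with f' (u) ≤ 0, then the operator L(Φ) := Δ_g Φ - 2⟨∇_g W / W, ∇_g Φ⟩_g satisfies L(W) ≥ 0; i.e., W is a supersolution-free subsolution of L. Moreover Δ_g u = -f(u)/W and ∇_g u = W^{-2} u_i ∂_i. -/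
noncomputable section

/-- `W = √(1+|∇u|²)`, the area element of the graph of `u`. -/
noncomputable def Wfun {n : ℕ} (u : EuclideanSpace ℝ (Fin n) → ℝ)
    (x : EuclideanSpace ℝ (Fin n)) : ℝ :=
  Real.sqrt (1 + gradSq u x)

/-- Inverse `g^{ij} = δ^{ij} - u_i u_j / W²` of the induced metric of the graph of `u`. -/
noncomputable def ginv {n : ℕ} (u : EuclideanSpace ℝ (Fin n) → ℝ)
    (x : EuclideanSpace ℝ (Fin n)) (i j : Fin n) : ℝ :=
  (if i = j then 1 else 0) - pd u i x * pd u j x / (1 + gradSq u x)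

/-- Laplace–Beltrami operator of the graph metric in coordinates:
`Δ_g Φ = W^{-1} ∂_i (W g^{ij} ∂_j Φ)` (here `√(det g) = W`). -/
noncomputable def lapg {n : ℕ} (u Φ : EuclideanSpace ℝ (Fin n) → ℝ)
    (x : EuclideanSpace ℝ (Fin n)) : ℝ :=
  (1 / Wfun u x) * ∑ i, pd (fun y => Wfun u y * ∑ j, ginv u y i j * pd Φ j y) i x

/-- Riemannian inner product of gradients: `⟨∇_g A, ∇_g B⟩_g = g^{ij} A_i B_j`. -/
noncomputable def gprod {n : ℕ} (u A B : EuclideanSpace ℝ (Fin n) → ℝ)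
    (x : EuclideanSpace ℝ (Fin n)) : ℝ :=
  ∑ i, ∑ j, ginv u x i j * pd A i x * pd B j x

/-- The operator `L(Φ) = Δ_g Φ - 2⟨∇_g W / W, ∇_g Φ⟩_g`. -/
noncomputable def Lop {n : ℕ} (u Φ : EuclideanSpace ℝ (Fin n) → ℝ)
    (x : EuclideanSpace ℝ (Fin n)) : ℝ :=
  lapg u Φ x - (2 / Wfun u x) * gprod u (Wfun u) Φ x


/-!
Write `a_i = u_i / W`, so that the equation reads `∂_i a_i = -f(u)`, and let `G = (g^{ij})`,
`H = D²u`. Since `W g^{ij} u_j = a_i`, we get `Δ_g u = W⁻¹ ∂_i a_i = -f(u) / W`. For `L(W)`, the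
product rule gives `L(W) = ∂_i (g^{ij} W_j) - ⟨∇_g W, ∇_g W⟩_g / W`, and `g^{ij} W_j = u_j ∂_j a_i`.
Commuting derivatives, `∂_i (u_j ∂_j a_i) = u_{ij} ∂_j a_i + u_j ∂_j (∂_i a_i)`, whose last term is
`-f'(u) |∇u|²` by the differentiated equation. With `∂_j a_i = (G H)_{ij} / W` this becomes
`L(W) = tr(G H G H) / W - f'(u) |∇u|²` (that is, `W |A|² - f'(u) |∇u|²`), and the trace is
nonnegative because `G` is positive semidefinite and `H` symmetric.
-/

open Filter Finset Matrix Topology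

open scoped ComplexOrder MatrixOrder Matrix.Norms.L2Operator in
theorem Matrix.PosSemidef.trace_mul_nonneg {𝕜 ι : Type*} [RCLike 𝕜] [Fintype ι] [DecidableEq ι]
    {A B : Matrix ι ι 𝕜} (hA : A.PosSemidef) (hB : B.PosSemidef) : 0 ≤ (A * B).trace := by
  obtain ⟨X, rfl⟩ := CStarAlgebra.nonneg_iff_eq_star_mul_self.mp hA.nonneg
  rw [star_eq_conjTranspose, Matrix.mul_assoc, trace_mul_comm]
  exact (hB.mul_mul_conjTranspose_same X).trace_nonneg

section PartialDerivatives

variable {n : ℕ} {f g : EuclideanSpace ℝ (Fin n) → ℝ} {x : EuclideanSpace ℝ (Fin n)}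

theorem pd_congr (h : f =ᶠ[𝓝 x] g) (i : Fin n) : pd f i x = pd g i x := by
  rw [pd, pd, h.fderiv_eq]

theorem pd_neg (i : Fin n) : pd (fun y => -f y) i x = -pd f i x := by
  simp [pd, fderiv_fun_neg]

theorem pd_const_add (c : ℝ) (i : Fin n) : pd (fun y => c + f y) i x = pd f i x := by
  rw [pd, pd, fderiv_const_add]

theorem pd_mul (hf : DifferentiableAt ℝ f x) (hg : DifferentiableAt ℝ g x) (i : Fin n) :
    pd (fun y => f y * g y) i x = f x * pd g i x + g x * pd f i x := by
  simp [pd, fderiv_fun_mul hf hg]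

theorem pd_sum {ι : Type*} {s : Finset ι} {F : ι → EuclideanSpace ℝ (Fin n) → ℝ}
    (h : ∀ j ∈ s, DifferentiableAt ℝ (F j) x) (i : Fin n) :
    pd (fun y => ∑ j ∈ s, F j y) i x = ∑ j ∈ s, pd (F j) i x := by
  simp [pd, fderiv_fun_sum h]

theorem pd_comp {φ : ℝ → ℝ} (hφ : DifferentiableAt ℝ φ (f x)) (hf : DifferentiableAt ℝ f x)
    (i : Fin n) : pd (fun y => φ (f y)) i x = deriv φ (f x) * pd f i x := by
  simp [pd, fderiv_fun_comp x hφ hf, fderiv_eq_smul_deriv, mul_comm]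

theorem pd_pow (hf : DifferentiableAt ℝ f x) (m : ℕ) (i : Fin n) :
    pd (fun y => f y ^ m) i x = m * f x ^ (m - 1) * pd f i x := by
  rw [pd_comp (differentiableAt_pow m) hf, deriv_pow_field]

theorem pd_sqrt (hf : DifferentiableAt ℝ f x) (hx : f x ≠ 0) (i : Fin n) :
    pd (fun y => √(f y)) i x = pd f i x / (2 * √(f x)) := by
  simp only [pd, fderiv_sqrt hf hx, _root_.smul_apply, smul_eq_mul]
  ring

theorem pd_div (hf : DifferentiableAt ℝ f x) (hg : DifferentiableAt ℝ g x) (hx : g x ≠ 0)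
    (i : Fin n) : pd (fun y => f y / g y) i x = (pd f i x * g x - f x * pd g i x) / g x ^ 2 := by
  simp only [div_eq_mul_inv]
  rw [pd_mul (g := fun y => (g y)⁻¹) hf (hg.inv hx), pd_comp (differentiableAt_inv hx) hg,
    deriv_inv]
  field_simp
  ring

theorem pd_comm (hf : ContDiffAt ℝ 2 f x) (i j : Fin n) : pd (pd f i) j x = pd (pd f j) i x := by
  have hdf : DifferentiableAt ℝ (fderiv ℝ f) x :=
    (hf.fderiv_right (m := 1) le_rfl).differentiableAt one_ne_zero
  have hsnd : ∀ k l : Fin n, pd (pd f k) l x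
      = fderiv ℝ (fderiv ℝ f) x (EuclideanSpace.single l 1) (EuclideanSpace.single k 1) := by
    intro k l
    unfold pd
    rw [fderiv_clm_apply hdf (differentiableAt_const _)]
    simp
  rw [hsnd, hsnd]
  exact hf.isSymmSndFDerivAt (by simp [minSmoothness_of_isRCLikeNormedField]) _ _

theorem ContDiffAt.pd {k m : WithTop ℕ∞} (hf : ContDiffAt ℝ k f x) (hk : m + 1 ≤ k) (i : Fin n) :
    ContDiffAt ℝ m (_root_.pd f i) x :=
  (hf.fderiv_right hk).clm_apply contDiffAt_const

theorem ContDiffAt.differentiableAt_pd (hf : ContDiffAt ℝ 2 f x) (i : Fin n) :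
    DifferentiableAt ℝ (_root_.pd f i) x :=
  (hf.pd (m := 1) (by norm_num) i).differentiableAt one_ne_zero

end PartialDerivatives

def divergence {n : ℕ} (a : Fin n → EuclideanSpace ℝ (Fin n) → ℝ)
    (x : EuclideanSpace ℝ (Fin n)) : ℝ :=
  ∑ i, pd (a i) i x

theorem divergence_sum_mul_pd {n : ℕ} {v a : Fin n → EuclideanSpace ℝ (Fin n) → ℝ}
    {x : EuclideanSpace ℝ (Fin n)} (hv : ∀ j, DifferentiableAt ℝ (v j) x)
    (ha : ∀ i, ContDiffAt ℝ 2 (a i) x) :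
    divergence (fun i y => ∑ j, v j y * pd (a i) j y) x
      = ∑ i, ∑ j, pd (v j) i x * pd (a i) j x + ∑ j, v j x * pd (divergence a) j x := by
  have hva : ∀ i j, DifferentiableAt ℝ (fun y => v j y * pd (a i) j y) x := fun i j =>
    (hv j).mul ((ha i).differentiableAt_pd j)
  have hdiv : ∀ j, pd (divergence a) j x = ∑ i, pd (pd (a i) i) j x := fun j =>
    pd_sum (fun i _ => (ha i).differentiableAt_pd i) j
  simp only [divergence, pd_sum (fun j _ => hva _ j),
    pd_mul (hv _) ((ha _).differentiableAt_pd _), pd_comm (ha _), sum_add_distrib]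
  rw [add_comm]
  congr 1
  · exact sum_congr rfl fun i _ => sum_congr rfl fun j _ => mul_comm _ _
  · simp only [hdiv, mul_sum]
    exact sum_comm

section GraphGeometry

variable {n : ℕ} {u : EuclideanSpace ℝ (Fin n) → ℝ} {x : EuclideanSpace ℝ (Fin n)}

def grad (u : EuclideanSpace ℝ (Fin n) → ℝ) (x : EuclideanSpace ℝ (Fin n)) : Fin n → ℝ :=
  fun i => pd u i x

def hess (u : EuclideanSpace ℝ (Fin n) → ℝ) (x : EuclideanSpace ℝ (Fin n)) :
    Matrix (Fin n) (Fin n) ℝ :=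
  Matrix.of fun i j => pd (pd u j) i x

def fluxField (u : EuclideanSpace ℝ (Fin n) → ℝ) (i : Fin n) : EuclideanSpace ℝ (Fin n) → ℝ :=
  fun y => pd u i y / Wfun u y

def ginvMatrix (u : EuclideanSpace ℝ (Fin n) → ℝ) (x : EuclideanSpace ℝ (Fin n)) :
    Matrix (Fin n) (Fin n) ℝ :=
  Matrix.of (ginv u x)

theorem mcOp_eq_divergence : mcOp u = divergence (fluxField u) := rfl

theorem gradSq_eq_dotProduct : gradSq u x = grad u x ⬝ᵥ grad u x := by
  simp [gradSq, grad, dotProduct, sq]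

theorem gradSq_nonneg (u : EuclideanSpace ℝ (Fin n) → ℝ) (x : EuclideanSpace ℝ (Fin n)) :
    0 ≤ gradSq u x := by
  unfold gradSq
  positivity

theorem one_add_gradSq_pos (u : EuclideanSpace ℝ (Fin n) → ℝ) (x : EuclideanSpace ℝ (Fin n)) :
    0 < 1 + gradSq u x := by
  linarith [gradSq_nonneg u x]

theorem Wfun_pos (u : EuclideanSpace ℝ (Fin n) → ℝ) (x : EuclideanSpace ℝ (Fin n)) :
    0 < Wfun u x :=
  Real.sqrt_pos.2 (one_add_gradSq_pos u x)

theorem Wfun_sq : Wfun u x ^ 2 = 1 + gradSq u x := Real.sq_sqrt (one_add_gradSq_pos u x).le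

theorem ginvMatrix_eq :
    ginvMatrix u x = 1 - (Wfun u x ^ 2)⁻¹ • vecMulVec (grad u x) (grad u x) := by
  ext i j
  simp [ginvMatrix, ginv, one_apply, vecMulVec_apply, grad, Wfun_sq, div_eq_inv_mul, mul_comm]

theorem ginvMatrix_mulVec_grad : ginvMatrix u x *ᵥ grad u x = (Wfun u x ^ 2)⁻¹ • grad u x := by
  have hc : 1 - (Wfun u x ^ 2)⁻¹ * gradSq u x = (Wfun u x ^ 2)⁻¹ := by
    have := (Wfun_pos u x).ne'
    field_simp
    rw [Wfun_sq]
    ring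
  rw [ginvMatrix_eq, sub_mulVec, one_mulVec, smul_mulVec, vecMulVec_mulVec, op_smul_eq_smul,
    ← gradSq_eq_dotProduct, smul_smul]
  conv_rhs => rw [← hc, sub_smul, one_smul]

theorem ginvMatrix_posSemidef : (ginvMatrix u x).PosSemidef := by
  refine .of_dotProduct_mulVec_nonneg ?_ fun v => ?_
  · refine isHermitian_iff_isSymm.2 (IsSymm.ext_iff.2 fun i j => ?_)
    simp only [ginvMatrix, ginv, of_apply, eq_comm (a := i)]
    ring
  have hCS : (grad u x ⬝ᵥ v) ^ 2 ≤ gradSq u x * (v ⬝ᵥ v) := by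
    simpa [gradSq, grad, dotProduct, sq] using sum_mul_sq_le_sq_mul_sq univ (grad u x) v
  have hvv : 0 ≤ v ⬝ᵥ v := by
    simpa [dotProduct, sq] using sum_nonneg fun i (_ : i ∈ univ) => sq_nonneg (v i)
  rw [star_trivial, ginvMatrix_eq, sub_mulVec, one_mulVec, smul_mulVec, vecMulVec_mulVec,
    op_smul_eq_smul, smul_smul, dotProduct_sub, dotProduct_smul, dotProduct_comm v (grad u x),
    smul_eq_mul, sub_nonneg, mul_assoc, ← sq, inv_mul_le_iff₀ (pow_pos (Wfun_pos u x) 2), Wfun_sq]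
  nlinarith

theorem hess_isSymm (hu : ContDiffAt ℝ 2 u x) : (hess u x).IsSymm :=
  IsSymm.ext_iff.2 fun i j => pd_comm hu i j

theorem gprod_eq_dotProduct (A B : EuclideanSpace ℝ (Fin n) → ℝ) :
    gprod u A B x = grad A x ⬝ᵥ (ginvMatrix u x *ᵥ grad B x) := by
  simp only [gprod, dotProduct, mulVec, grad, ginvMatrix, of_apply, mul_sum, mul_assoc,
    mul_left_comm (pd A _ x)]

section Regularity

variable {k m : WithTop ℕ∞} (hu : ContDiffAt ℝ k u x) (hk : m + 1 ≤ k)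
include hu hk

theorem contDiffAt_gradSq : ContDiffAt ℝ m (gradSq u) x :=
  ContDiffAt.sum fun i _ => (hu.pd hk i).pow 2

theorem contDiffAt_Wfun : ContDiffAt ℝ m (Wfun u) x :=
  (contDiffAt_const.add (contDiffAt_gradSq hu hk)).sqrt (one_add_gradSq_pos u x).ne'

theorem contDiffAt_ginv (i j : Fin n) : ContDiffAt ℝ m (fun y => ginv u y i j) x :=
  contDiffAt_const.sub (((hu.pd hk i).mul (hu.pd hk j)).div
    (contDiffAt_const.add (contDiffAt_gradSq hu hk)) (one_add_gradSq_pos u x).ne')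

theorem contDiffAt_fluxField (i : Fin n) : ContDiffAt ℝ m (fluxField u i) x :=
  (hu.pd hk i).div (contDiffAt_Wfun hu hk) (Wfun_pos u x).ne'

end Regularity

section SecondOrder

variable (hu : ContDiffAt ℝ 2 u x)
include hu

theorem pd_gradSq_s19 (k : Fin n) : pd (gradSq u) k x = 2 * (hess u x *ᵥ grad u x) k := by
  change pd (fun y => ∑ i, pd u i y ^ 2) k x = _
  rw [pd_sum (F := fun i y => pd u i y ^ 2) fun i _ => (hu.differentiableAt_pd i).pow 2]
  simp only [pd_pow (hu.differentiableAt_pd _), mulVec, dotProduct, hess, grad, of_apply, mul_sum]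
  exact sum_congr rfl fun i _ => by push_cast; ring

theorem pd_Wfun (k : Fin n) : pd (Wfun u) k x = (hess u x *ᵥ grad u x) k / Wfun u x := by
  have hq : DifferentiableAt ℝ (fun y => 1 + gradSq u y) x :=
    ((contDiffAt_gradSq hu (m := 1) (by norm_num)).differentiableAt one_ne_zero).const_add 1
  change pd (fun y => √(1 + gradSq u y)) k x = _
  rw [pd_sqrt hq (one_add_gradSq_pos u x).ne', pd_const_add, pd_gradSq_s19 hu]
  change _ / (2 * Wfun u x) = _
  field_simp

theorem ginvMatrix_mul_hess : ginvMatrix u x * hess u x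
    = hess u x - (Wfun u x ^ 2)⁻¹ • vecMulVec (grad u x) (hess u x *ᵥ grad u x) := by
  rw [ginvMatrix_eq, sub_mul, one_mul, smul_mul_assoc, vecMulVec_mul, ← vecMul_transpose,
    (hess_isSymm hu).eq]

theorem pd_fluxField (i j : Fin n) :
    pd (fluxField u i) j x = (ginvMatrix u x * hess u x) i j / Wfun u x := by
  have hW := (Wfun_pos u x).ne'
  change pd (fun y => pd u i y / Wfun u y) j x = _
  rw [pd_div (hu.differentiableAt_pd i)
    ((contDiffAt_Wfun hu (m := 1) (by norm_num)).differentiableAt one_ne_zero) hW,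
    pd_Wfun hu, ginvMatrix_mul_hess hu, pd_comm hu i j]
  simp only [Matrix.sub_apply, Matrix.smul_apply, vecMulVec_apply, hess, grad, of_apply,
    smul_eq_mul]
  field_simp

theorem sum_ginv_mul_pd_Wfun (i : Fin n) :
    ∑ j, ginv u x i j * pd (Wfun u) j x = ∑ j, pd u j x * pd (fluxField u i) j x :=
  calc ∑ j, ginv u x i j * pd (Wfun u) j x
      = (ginvMatrix u x *ᵥ (hess u x *ᵥ grad u x)) i / Wfun u x := by
        simp [pd_Wfun hu, mulVec, dotProduct, sum_div, mul_div_assoc, ginvMatrix]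
    _ = ((ginvMatrix u x * hess u x) *ᵥ grad u x) i / Wfun u x := by rw [mulVec_mulVec]
    _ = ∑ j, pd u j x * pd (fluxField u i) j x := by
        simp [pd_fluxField hu, mulVec, dotProduct, sum_div, mul_div_assoc, mul_comm, grad]

end SecondOrder

end GraphGeometry

section Operators

variable {n : ℕ} {u : EuclideanSpace ℝ (Fin n) → ℝ} {x : EuclideanSpace ℝ (Fin n)}

theorem sum_ginv_mul_pd_self (i : Fin n) :
    ∑ j, ginv u x i j * pd u j x = pd u i x / Wfun u x ^ 2 := by
  simpa [mulVec, dotProduct, ginvMatrix, grad, div_eq_inv_mul] using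
    congrFun (ginvMatrix_mulVec_grad (u := u) (x := x)) i

theorem lapg_self : lapg u u x = mcOp u x / Wfun u x := by
  have hflux : ∀ i, (fun y => Wfun u y * ∑ j, ginv u y i j * pd u j y) = fluxField u i :=
    fun i => funext fun y => by
      rw [sum_ginv_mul_pd_self, fluxField, mul_div_assoc', sq, ← div_div,
        mul_div_cancel_left₀ _ (Wfun_pos u y).ne']
  simp only [lapg, hflux, mcOp_eq_divergence, divergence]
  ring

theorem Lop_eq_divergence_sub {Φ : EuclideanSpace ℝ (Fin n) → ℝ} (hu : ContDiffAt ℝ 2 u x)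
    (hΦ : ContDiffAt ℝ 2 Φ x) :
    Lop u Φ x = divergence (fun i y => ∑ j, ginv u y i j * pd Φ j y) x
      - gprod u (Wfun u) Φ x / Wfun u x := by
  have hW := (Wfun_pos u x).ne'
  have hWd := (contDiffAt_Wfun hu (m := 1) (by norm_num)).differentiableAt one_ne_zero
  have hY : ∀ i, DifferentiableAt ℝ (fun y => ∑ j, ginv u y i j * pd Φ j y) x := fun i =>
    DifferentiableAt.fun_sum fun j _ =>
      ((contDiffAt_ginv hu (m := 1) (by norm_num) i j).differentiableAt one_ne_zero).mul
        (hΦ.differentiableAt_pd j)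
  have hgprod : gprod u (Wfun u) Φ x
      = ∑ i, (∑ j, ginv u x i j * pd Φ j x) * pd (Wfun u) i x := by
    simp only [gprod, sum_mul]
    exact sum_congr rfl fun i _ => sum_congr rfl fun j _ => by ring
  simp only [Lop, lapg, divergence, pd_mul hWd (hY _), sum_add_distrib, ← mul_sum, hgprod]
  field_simp
  ring

theorem pd_mcOp_of_eventually {f : ℝ → ℝ} (hPDE : ∀ᶠ y in 𝓝 x, mcOp u y + f (u y) = 0)
    (hf : DifferentiableAt ℝ f (u x)) (hu : DifferentiableAt ℝ u x) (j : Fin n) :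
    pd (mcOp u) j x = -(deriv f (u x) * pd u j x) := by
  rw [pd_congr (hPDE.mono fun y hy => eq_neg_of_add_eq_zero_left hy) j, pd_neg, pd_comp hf hu]

theorem trace_ginv_hess_sq (hu : ContDiffAt ℝ 2 u x) :
    (ginvMatrix u x * hess u x * ginvMatrix u x * hess u x).trace
      = ∑ i, ∑ j, hess u x i j * (ginvMatrix u x * hess u x) i j
        - (hess u x *ᵥ grad u x) ⬝ᵥ (ginvMatrix u x *ᵥ (hess u x *ᵥ grad u x))
          / Wfun u x ^ 2 := by
  have hpH : grad u x ᵥ* hess u x = hess u x *ᵥ grad u x := by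
    conv_lhs => rw [← (hess_isSymm hu).eq]
    exact vecMul_transpose _ _
  nth_rewrite 2 [ginvMatrix_eq]
  rw [mul_sub, mul_one, sub_mul, trace_sub, mul_smul_comm, smul_mul_assoc, trace_smul,
    mul_vecMulVec, vecMulVec_mul, hpH, trace_vecMulVec, ← mulVec_mulVec, dotProduct_comm,
    smul_eq_mul, inv_mul_eq_div]
  congr 1
  refine sum_congr rfl fun i _ => ?_
  rw [diag_apply, mul_apply]
  exact sum_congr rfl fun j _ => by rw [(hess_isSymm hu).apply i j, mul_comm]

theorem trace_ginv_hess_sq_nonneg (hu : ContDiffAt ℝ 2 u x) :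
    0 ≤ (ginvMatrix u x * hess u x * ginvMatrix u x * hess u x).trace := by
  have hHGH : (hess u x * ginvMatrix u x * hess u x).PosSemidef := by
    simpa [conjTranspose_eq_transpose_of_trivial, (hess_isSymm hu).eq] using
      ginvMatrix_posSemidef.conjTranspose_mul_mul_same (hess u x)
  simpa only [Matrix.mul_assoc] using ginvMatrix_posSemidef.trace_mul_nonneg hHGH

theorem Lop_Wfun_eq {f : ℝ → ℝ} (hu : ContDiffAt ℝ 3 u x)
    (hPDE : ∀ᶠ y in 𝓝 x, mcOp u y + f (u y) = 0) (hf : DifferentiableAt ℝ f (u x)) :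
    Lop u (Wfun u) x
      = (ginvMatrix u x * hess u x * ginvMatrix u x * hess u x).trace / Wfun u x
        - deriv f (u x) * gradSq u x := by
  have hu2 : ContDiffAt ℝ 2 u x := hu.of_le (by norm_num)
  have hY : divergence (fun i y => ∑ j, ginv u y i j * pd (Wfun u) j y) x
      = divergence (fun i y => ∑ j, pd u j y * pd (fluxField u i) j y) x :=
    sum_congr rfl fun i _ => pd_congr ((hu2.eventually (by simp)).mono
      fun y hy => sum_ginv_mul_pd_Wfun hy i) i
  have hgradW : grad (Wfun u) x = (Wfun u x)⁻¹ • (hess u x *ᵥ grad u x) := by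
    ext k
    simp [grad, pd_Wfun hu2, div_eq_inv_mul]
  rw [Lop_eq_divergence_sub hu2 (contDiffAt_Wfun hu (by norm_num)), hY,
    divergence_sum_mul_pd (fun j => hu2.differentiableAt_pd j)
      (fun i => contDiffAt_fluxField hu (by norm_num) i),
    ← mcOp_eq_divergence, trace_ginv_hess_sq hu2, gprod_eq_dotProduct, hgradW]
  simp only [pd_mcOp_of_eventually hPDE hf (hu2.differentiableAt two_ne_zero), pd_fluxField hu2]
  have hHess : ∑ i, ∑ j, pd (pd u j) i x * ((ginvMatrix u x * hess u x) i j / Wfun u x)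
      = (∑ i, ∑ j, hess u x i j * (ginvMatrix u x * hess u x) i j) / Wfun u x := by
    simp only [sum_div, mul_div_assoc, hess, of_apply]
  have hq : ∑ j, pd u j x * -(deriv f (u x) * pd u j x) = -(deriv f (u x) * gradSq u x) := by
    simp only [gradSq, mul_sum, ← sum_neg_distrib]
    exact sum_congr rfl fun j _ => by ring
  rw [hHess, hq, mulVec_smul, dotProduct_smul, smul_dotProduct, smul_eq_mul, smul_eq_mul]
  have hW := (Wfun_pos u x).ne'
  field_simp
  ring

end Operators

/-- on the graph `(Σ,g)` of a solution `u` of the prescribed mean curvature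
equation with `f'(u) ≤ 0`, one has `L(W) ≥ 0`, `Δ_g u = -f(u)/W` and
`∇_g u = W^{-2} u_i ∂_i` (in coordinates: `g^{ij}u_j = u_i/W²`). -/
theorem statement19 {n : ℕ} (Ω : Set (EuclideanSpace ℝ (Fin n))) (hΩ : IsOpen Ω)
    (u : EuclideanSpace ℝ (Fin n) → ℝ) (f : ℝ → ℝ)
    (hu : ContDiffOn ℝ 3 u Ω) (hf : ContDiff ℝ 1 f)
    (hPDE : ∀ x ∈ Ω, mcOp u x + f (u x) = 0)
    (hf' : ∀ x ∈ Ω, deriv f (u x) ≤ 0) :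
    ∀ x ∈ Ω,
      0 ≤ Lop u (Wfun u) x ∧
      lapg u u x = -f (u x) / Wfun u x ∧
      ∀ i, (∑ j, ginv u x i j * pd u j x) = pd u i x / (Wfun u x) ^ 2 := by
  intro x hx
  have hux : ContDiffAt ℝ 3 u x := hu.contDiffAt (hΩ.mem_nhds hx)
  refine ⟨?_, ?_, sum_ginv_mul_pd_self⟩
  · rw [Lop_Wfun_eq hux (eventually_of_mem (hΩ.mem_nhds hx) hPDE)
      (hf.differentiable one_ne_zero (u x))]
    have hA := div_nonneg (trace_ginv_hess_sq_nonneg (hux.of_le (by norm_num))) (Wfun_pos u x).le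
    have hf'q := mul_nonpos_of_nonpos_of_nonneg (hf' x hx) (gradSq_nonneg u x)
    linarith
  · rw [lapg_self, eq_neg_of_add_eq_zero_left (hPDE x hx), neg_div]
end
end
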